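/- The map X ↦ V(X) is an order isomorphism from the set of finite divisor-closed subsets of ℕ (ordered by inclusion) onto the set of varieties of distributive rotational lattices (ordered by inclusion): every variety of distributive rotational lattices equals V(X) for a unique finite divisor-closed X, and V(X) ⊆ V(Y) iff X ⊆ Y. -/

import Mathlib

/-!
A distributive lattice with an automorphism `g` of finite order is a subdirect product of
rotational cubes: a prime filter `F` has a finite `g`-orbit, of length `d` say, and
`c ↦ {j ∈ ℤ/d | g⁻ʲ c ∈ F}` is a homomorphism onto `𝔅_d`; it is onto because distinct filters of
one orbit are incomparable (a monotone map cannot move a periodic point strictly up or down).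
Hence a variety of distributive rotational lattices is generated by the cubes `𝔅_n` it contains.
Their dimensions form a divisor-closed set, since `𝔅_d` embeds in `𝔅_n` for `d ∣ n`, and a finite
one, since the rotation of their product has finite order. Conversely `X` is recovered from
`V(X)`: if `n ∉ X`, the identity `x₁ ⊓ ⋀_{m ∈ X} gᵐ x₀ ≤ x₀` holds in every `𝔅_m` with `m ∈ X`
but fails in `𝔅_n`, as `n` divides no element of `X`.
-/

/-- Terms in the signature `(⊔, ⊓, g)` with variables in `ℕ`. -/
inductive RTerm : Type
  | var : ℕ → RTerm
  | sup : RTerm → RTerm → RTerm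
  | inf : RTerm → RTerm → RTerm
  | rot : RTerm → RTerm

/-- Evaluation of a term in a raw algebra `(A; s, i, g)` of the signature. -/
def RTerm.eval {A : Type*} (s i : A → A → A) (g : A → A) (v : ℕ → A) : RTerm → A
  | .var k => v k
  | .sup t₁ t₂ => s (t₁.eval s i g v) (t₂.eval s i g v)
  | .inf t₁ t₂ => i (t₁.eval s i g v) (t₂.eval s i g v)
  | .rot t => g (t.eval s i g v)

/-- The algebra `(A; s, i, g)` satisfies the identity `e.1 ≈ e.2`. -/
def Sat {A : Type*} (s i : A → A → A) (g : A → A) (e : RTerm × RTerm) : Prop :=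
  ∀ v : ℕ → A, e.1.eval s i g v = e.2.eval s i g v

/-- `(A; s, i, g)` is a distributive rotational lattice: `s, i` are the join and
meet of a distributive lattice and `g` is an automorphism of finite order. -/
def IsDistRotLat {A : Type*} (s i : A → A → A) (g : A → A) : Prop :=
  (∀ x y, s x y = s y x) ∧ (∀ x y z, s (s x y) z = s x (s y z)) ∧
  (∀ x y, i x y = i y x) ∧ (∀ x y z, i (i x y) z = i x (i y z)) ∧
  (∀ x y, s x (i x y) = x) ∧ (∀ x y, i x (s x y) = x) ∧
  (∀ x y z, i x (s y z) = s (i x y) (i x z)) ∧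
  (∀ x y, g (s x y) = s (g x) (g y)) ∧ (∀ x y, g (i x y) = i (g x) (g y)) ∧
  Function.Bijective g ∧ (∃ n : ℕ, 0 < n ∧ g^[n] = id)

/-- The shift automorphism of the rotational cube `𝔅_n`. -/
def cubeShift (n : ℕ) : Set (ZMod n) → Set (ZMod n) :=
  fun S => (· + 1) '' S

/-- By Birkhoff's theorem, `(A; s, i, g)` belongs to the variety `V(X)` generated
by `{𝔅_n : n ∈ X}` iff it satisfies every identity valid in all generators. -/
def MemV (X : Set ℕ) {A : Type*} (s i : A → A → A) (g : A → A) : Prop :=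
  ∀ e : RTerm × RTerm,
    (∀ n ∈ X, Sat (· ∪ ·) (· ∩ ·) (cubeShift n) e) → Sat s i g e

/-- `X` is a finite divisor-closed set of positive integers. -/
def DivClosed (X : Set ℕ) : Prop :=
  X.Finite ∧ (∀ n ∈ X, 0 < n) ∧ ∀ x ∈ X, ∀ y : ℕ, y ∣ x → 0 < y → y ∈ X

open Function Set

structure IsRotHom {A B : Type*} (sA iA : A → A → A) (gA : A → A) (sB iB : B → B → B)
    (gB : B → B) (f : A → B) : Prop where
  map_sup : ∀ a b, f (sA a b) = sB (f a) (f b)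
  map_inf : ∀ a b, f (iA a b) = iB (f a) (f b)
  map_rot : ∀ a, f (gA a) = gB (f a)

section Identities

variable {A B : Type*} {sA iA : A → A → A} {gA : A → A} {sB iB : B → B → B} {gB : B → B}
  {f : A → B} {e : RTerm × RTerm}

theorem IsRotHom.map_eval (hf : IsRotHom sA iA gA sB iB gB f) (v : ℕ → A) (t : RTerm) :
    f (t.eval sA iA gA v) = t.eval sB iB gB (f ∘ v) := by
  induction t with
  | var k => rfl
  | sup t₁ t₂ ih₁ ih₂ => simp only [RTerm.eval, hf.map_sup, ih₁, ih₂]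
  | inf t₁ t₂ ih₁ ih₂ => simp only [RTerm.eval, hf.map_inf, ih₁, ih₂]
  | rot t ih => simp only [RTerm.eval, hf.map_rot, ih]

theorem Sat.of_injective (hf : IsRotHom sA iA gA sB iB gB f) (hinj : Injective f)
    (h : Sat sB iB gB e) : Sat sA iA gA e := fun v =>
  hinj <| by rw [hf.map_eval, hf.map_eval, h]

theorem Sat.of_surjective (hf : IsRotHom sA iA gA sB iB gB f) (hsurj : Surjective f)
    (h : Sat sA iA gA e) : Sat sB iB gB e := by
  intro v
  obtain ⟨w, rfl⟩ := hsurj.comp_left v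
  rw [← hf.map_eval, ← hf.map_eval, h]

theorem Sat.pi {ι : Type*} {A : ι → Type*} {s i : ∀ j, A j → A j → A j} {g : ∀ j, A j → A j}
    (h : ∀ j, Sat (s j) (i j) (g j) e) :
    Sat (fun a b j => s j (a j) (b j)) (fun a b j => i j (a j) (b j)) (Pi.map g) e := by
  intro v
  funext j
  have hj : IsRotHom (fun a b j => s j (a j) (b j)) (fun a b j => i j (a j) (b j)) (Pi.map g)
      (s j) (i j) (g j) (fun a => a j) := ⟨fun _ _ => rfl, fun _ _ => rfl, fun _ => rfl⟩
  exact (hj.map_eval v e.1).trans ((h j _).trans (hj.map_eval v e.2).symm)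

end Identities

theorem RTerm.eval_rot_iterate {A : Type*} (s i : A → A → A) (g : A → A) (v : ℕ → A) (m : ℕ)
    (t : RTerm) : (RTerm.rot^[m] t).eval s i g v = g^[m] (t.eval s i g v) := by
  induction m with
  | zero => rfl
  | succ m ih => rw [iterate_succ_apply', iterate_succ_apply', RTerm.eval, ih]

theorem IsDistRotLat.exists_iterate_eq_id {A : Type*} {s i : A → A → A} {g : A → A}
    (h : IsDistRotLat s i g) : ∃ k, 0 < k ∧ g^[k] = id :=
  h.2.2.2.2.2.2.2.2.2.2

section Cube

variable {n : ℕ} {S : Set (ZMod n)} {z : ZMod n}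

theorem mem_cubeShift : z ∈ cubeShift n S ↔ z - 1 ∈ S :=
  ⟨by rintro ⟨w, hw, rfl⟩; simpa using hw, fun h => ⟨z - 1, h, sub_add_cancel z 1⟩⟩

theorem mem_cubeShift_iterate (m : ℕ) : z ∈ (cubeShift n)^[m] S ↔ z - m ∈ S := by
  induction m generalizing z with
  | zero => simp
  | succ m ih => rw [iterate_succ_apply', mem_cubeShift, ih, sub_sub, Nat.cast_succ, add_comm]

theorem dvd_of_isPeriodicPt_cubeShift {k : ℕ} (h : IsPeriodicPt (cubeShift n) k {0}) : n ∣ k := by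
  have hk : (k : ZMod n) ∈ (cubeShift n)^[k] {0} := by
    rw [mem_cubeShift_iterate, sub_self]
    rfl
  rwa [h.eq, mem_singleton_iff, ZMod.natCast_eq_zero_iff] at hk

theorem Sat.cube_of_dvd {d : ℕ} (hdn : d ∣ n) {e : RTerm × RTerm}
    (h : Sat (· ∪ ·) (· ∩ ·) (cubeShift n) e) : Sat (· ∪ ·) (· ∩ ·) (cubeShift d) e := by
  let π : ZMod n →+* ZMod d := ZMod.castHom hdn (ZMod d)
  refine Sat.of_injective (f := preimage π) ⟨fun _ _ => rfl, fun _ _ => rfl, fun S => ?_⟩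
    (ZMod.ringHom_surjective π).preimage_injective h
  ext z
  simp only [mem_preimage, mem_cubeShift, map_sub, map_one]

end Cube

theorem Set.Finite.of_isDistRotLat_pi_cube {X : Set ℕ}
    (h : IsDistRotLat (fun a b n => a n ∪ b n) (fun a b n => a n ∩ b n)
      (Pi.map fun n : X => cubeShift n)) : X.Finite := by
  obtain ⟨k, hk, hgk⟩ := h.exists_iterate_eq_id
  have hper : IsPeriodicPt (Pi.map fun n : X => cubeShift n) k fun _ => {0} := congrFun hgk _
  exact (finite_le_nat k).subset fun n hn =>
    Nat.le_of_dvd hk (dvd_of_isPeriodicPt_cubeShift (isPeriodicPt_piMap.1 hper ⟨n, hn⟩))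

section ZModOrbit

variable {α : Type*} {f : α → α} {x : α}

variable (f x) in
noncomputable def zmodOrbit (j : ZMod (minimalPeriod f x)) : α := f^[j.val] x

theorem zmodOrbit_zero : zmodOrbit f x 0 = x := by
  rw [zmodOrbit, ZMod.val_zero, iterate_zero_apply]

theorem zmodOrbit_add_natCast (hx : x ∈ periodicPts f) (j : ZMod (minimalPeriod f x)) (n : ℕ) :
    zmodOrbit f x (j + n) = f^[n] (zmodOrbit f x j) := by
  have : NeZero (minimalPeriod f x) := ⟨(minimalPeriod_pos_of_mem_periodicPts hx).ne'⟩
  rw [zmodOrbit, zmodOrbit, ZMod.val_add, ZMod.val_natCast, Nat.add_mod_mod,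
    iterate_mod_minimalPeriod_eq, add_comm, iterate_add_apply]

theorem zmodOrbit_injective (hx : x ∈ periodicPts f) : Injective (zmodOrbit f x) := by
  have : NeZero (minimalPeriod f x) := ⟨(minimalPeriod_pos_of_mem_periodicPts hx).ne'⟩
  exact fun i j h => ZMod.val_injective _ (iterate_injOn_Iio_minimalPeriod (ZMod.val_lt i)
    (ZMod.val_lt j) h)

/-- Iterating `y ≤ fⁿ y` around the orbit gives `y ≤ fⁿ y ≤ f^{nd} y = y`. -/
theorem Monotone.eq_of_zmodOrbit_le [PartialOrder α] (hf : Monotone f) (hx : x ∈ periodicPts f)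
    {i j : ZMod (minimalPeriod f x)} (h : zmodOrbit f x i ≤ zmodOrbit f x j) : i = j := by
  have hd := minimalPeriod_pos_of_mem_periodicPts hx
  have : NeZero (minimalPeriod f x) := ⟨hd.ne'⟩
  set y := zmodOrbit f x i
  set n := (j - i).val
  have hj : zmodOrbit f x j = f^[n] y := by
    rw [← zmodOrbit_add_natCast hx, ZMod.natCast_zmod_val, add_sub_cancel]
  have hy : IsPeriodicPt f (minimalPeriod f x) y := by
    rw [IsPeriodicPt, IsFixedPt, ← zmodOrbit_add_natCast hx, ZMod.natCast_self, add_zero]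
  have hle : f^[n] y ≤ y := by
    have := (hf.iterate n).monotone_iterate_of_le_map (hj ▸ h) hd
    simpa only [iterate_one, (hy.iterate n).eq] using this
  exact zmodOrbit_injective hx (h.antisymm (hj ▸ hle))

end ZModOrbit

/-- A prime filter, improper ones (`∅`, `univ`) included; equivalently, the preimage of `True`
under a lattice homomorphism to `Prop`. -/
structure IsPrimeFilter {A : Type*} [Lattice A] (F : Set A) : Prop where
  sup_mem_iff : ∀ a b, a ⊔ b ∈ F ↔ a ∈ F ∨ b ∈ F
  inf_mem_iff : ∀ a b, a ⊓ b ∈ F ↔ a ∈ F ∧ b ∈ F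

theorem IsPrimeFilter.preimage {A : Type*} [Lattice A] {F : Set A} (hF : IsPrimeFilter F)
    {g : A → A} (hg_sup : ∀ a b, g (a ⊔ b) = g a ⊔ g b) (hg_inf : ∀ a b, g (a ⊓ b) = g a ⊓ g b) :
    IsPrimeFilter (g ⁻¹' F) :=
  ⟨fun a b => by simp only [mem_preimage, hg_sup, hF.sup_mem_iff],
    fun a b => by simp only [mem_preimage, hg_inf, hF.inf_mem_iff]⟩

theorem exists_isPrimeFilter_mem_not_mem {A : Type*} [DistribLattice A] {x y : A}
    (hxy : ¬ x ≤ y) : ∃ F : Set A, IsPrimeFilter F ∧ x ∈ F ∧ y ∉ F := by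
  obtain ⟨J, hJ, hyJ, hxJ⟩ := DistribLattice.prime_ideal_of_disjoint_filter_ideal
    (F := Order.PFilter.principal x) (I := Order.Ideal.principal y)
    (disjoint_left.2 fun a hxa hay => hxy (le_trans (Order.PFilter.mem_principal.1 hxa)
      (Order.Ideal.mem_principal.1 hay)))
  refine ⟨(J : Set A)ᶜ, ⟨fun a b => ?_, fun a b => ?_⟩,
    disjoint_left.1 hxJ (Order.PFilter.mem_principal.2 le_rfl),
    not_not.2 (hyJ (Order.Ideal.mem_principal.2 le_rfl))⟩
  · simp only [mem_compl_iff, SetLike.mem_coe, Order.Ideal.sup_mem_iff, not_and_or]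
  · simp only [mem_compl_iff, SetLike.mem_coe, ← not_or]
    exact not_congr ⟨hJ.mem_or_mem, fun h => h.elim (J.lower inf_le_left) (J.lower inf_le_right)⟩

theorem eq_univ_of_separating {S : Type*} [Finite S] [Nonempty S] {B : Set (Set S)}
    (hsup : SupClosed B) (hinf : InfClosed B) (hmem : ∀ j, ∃ T ∈ B, j ∈ T)
    (hnmem : ∀ j, ∃ T ∈ B, j ∉ T) (hsep : ∀ j j', j ≠ j' → ∃ T ∈ B, j ∈ T ∧ j' ∉ T) :
    B = univ := by
  classical
  have hsingleton (j : S) : {j} ∈ B := by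
    have (j' : S) : ∃ T ∈ B, j ∈ T ∧ (j' ∈ T → j' = j) := by
      by_cases h : j' = j
      · obtain ⟨T, hT, hjT⟩ := hmem j
        exact ⟨T, hT, hjT, fun _ => h⟩
      · obtain ⟨T, hT, hjT, hj'T⟩ := hsep j j' (Ne.symm h)
        exact ⟨T, hT, hjT, fun h' => absurd h' hj'T⟩
    choose T hTB hjT hT using this
    convert hinf.iInf_mem_of_nonempty hTB
    ext j'
    simp only [mem_singleton_iff, iInf_eq_iInter, mem_iInter]
    exact ⟨fun h i => h ▸ hjT i, fun h => hT j' (h j')⟩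
  have hempty : ∅ ∈ B := by
    choose T hTB hT using hnmem
    convert hinf.iInf_mem_of_nonempty hTB
    ext j
    simp only [mem_empty_iff_false, iInf_eq_iInter, mem_iInter, false_iff, not_forall]
    exact ⟨j, hT j⟩
  refine eq_univ_of_forall fun U => ?_
  convert hsup.iSup_mem_of_nonempty (f := fun j => if j ∈ U then {j} else ∅)
    fun j => by split_ifs <;> simp [hsingleton, hempty]
  ext j
  simp

section CubeRep

variable {A : Type*} {g : A → A} {F : Set A}

theorem zmodOrbit_preimage_add_natCast (hper : F ∈ periodicPts (preimage g))
    (j : ZMod (minimalPeriod (preimage g) F)) (n : ℕ) :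
    zmodOrbit (preimage g) F (j + n) = g^[n] ⁻¹' zmodOrbit (preimage g) F j := by
  rw [zmodOrbit_add_natCast hper, preimage_iterate_eq]

variable (g F) in
/-- `j ∈ cubeRep g F c ↔ g⁻ʲ c ∈ F`; the sign makes `g` act on the image as the shift of `𝔅_d`. -/
noncomputable def cubeRep (c : A) : Set (ZMod (minimalPeriod (preimage g) F)) :=
  {j | c ∈ zmodOrbit (preimage g) F (-j)}

theorem zero_mem_cubeRep {c : A} : 0 ∈ cubeRep g F c ↔ c ∈ F := by
  rw [cubeRep, mem_ofPred_eq, neg_zero, zmodOrbit_zero]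

theorem mem_cubeRep_iterate_val (hper : F ∈ periodicPts (preimage g)) (c : A)
    (j : ZMod (minimalPeriod (preimage g) F)) : j ∈ cubeRep g F (g^[j.val] c) ↔ c ∈ F := by
  have : NeZero (minimalPeriod (preimage g) F) :=
    ⟨(minimalPeriod_pos_of_mem_periodicPts hper).ne'⟩
  rw [cubeRep, mem_ofPred_eq, ← mem_preimage, ← zmodOrbit_preimage_add_natCast hper,
    ZMod.natCast_zmod_val, neg_add_cancel, zmodOrbit_zero]

variable [Lattice A]

theorem isRotHom_cubeRep (hF : IsPrimeFilter F) (hper : F ∈ periodicPts (preimage g))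
    (hg_sup : ∀ a b, g (a ⊔ b) = g a ⊔ g b) (hg_inf : ∀ a b, g (a ⊓ b) = g a ⊓ g b) :
    IsRotHom (· ⊔ ·) (· ⊓ ·) g (· ∪ ·) (· ∩ ·) (cubeShift _) (cubeRep g F) := by
  have hprime (j) : IsPrimeFilter (zmodOrbit (preimage g) F j) :=
    Iterate.rec IsPrimeFilter hF (fun _ hS => hS.preimage hg_sup hg_inf) _
  refine ⟨fun a b => ext fun _ => (hprime _).sup_mem_iff a b,
    fun a b => ext fun _ => (hprime _).inf_mem_iff a b, fun a => ext fun j => ?_⟩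
  simp only [mem_cubeShift, cubeRep, mem_ofPred_eq]
  rw [show -(j - 1) = -j + (1 : ℕ) by push_cast; ring, zmodOrbit_preimage_add_natCast hper,
    iterate_one, mem_preimage]

/-- Distinct filters of one orbit are incomparable, so the image separates the points of `ℤ/d`
in both directions. -/
theorem cubeRep_surjective (hF : IsPrimeFilter F) (hper : F ∈ periodicPts (preimage g))
    (hg_sup : ∀ a b, g (a ⊔ b) = g a ⊔ g b) (hg_inf : ∀ a b, g (a ⊓ b) = g a ⊓ g b)
    (hF_ne : F.Nonempty) (hFc_ne : Fᶜ.Nonempty) : Surjective (cubeRep g F) := by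
  have : NeZero (minimalPeriod (preimage g) F) :=
    ⟨(minimalPeriod_pos_of_mem_periodicPts hper).ne'⟩
  have hφ := isRotHom_cubeRep hF hper hg_sup hg_inf
  obtain ⟨x, hx⟩ := hF_ne
  obtain ⟨y, hy⟩ := hFc_ne
  refine range_eq_univ.1 (eq_univ_of_separating ?_ ?_ ?_ ?_ ?_)
  · rintro _ ⟨a, rfl⟩ _ ⟨b, rfl⟩
    exact ⟨a ⊔ b, hφ.map_sup a b⟩
  · rintro _ ⟨a, rfl⟩ _ ⟨b, rfl⟩
    exact ⟨a ⊓ b, hφ.map_inf a b⟩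
  · exact fun j => ⟨_, mem_range_self _, (mem_cubeRep_iterate_val hper x j).2 hx⟩
  · exact fun j => ⟨_, mem_range_self _, mt (mem_cubeRep_iterate_val hper y j).1 hy⟩
  · intro j j' hjj'
    have hnot : ¬ zmodOrbit (preimage g) F (-j) ⊆ zmodOrbit (preimage g) F (-j') := fun hle =>
      hjj' (neg_injective (monotone_preimage.eq_of_zmodOrbit_le hper hle))
    obtain ⟨c, hc, hc'⟩ := not_subset.1 hnot
    exact ⟨_, mem_range_self c, hc, hc'⟩

end CubeRep

theorem exists_surjective_cubeHom_of_not_le {A : Type*} [DistribLattice A] {g : A → A}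
    (hg_sup : ∀ a b, g (a ⊔ b) = g a ⊔ g b) (hg_inf : ∀ a b, g (a ⊓ b) = g a ⊓ g b)
    {k : ℕ} (hk : 0 < k) (hgk : g^[k] = id) {x y : A} (hxy : ¬ x ≤ y) :
    ∃ d, 0 < d ∧ ∃ φ : A → Set (ZMod d),
      IsRotHom (· ⊔ ·) (· ⊓ ·) g (· ∪ ·) (· ∩ ·) (cubeShift d) φ ∧ Surjective φ ∧ φ x ≠ φ y := by
  obtain ⟨F, hF, hxF, hyF⟩ := exists_isPrimeFilter_mem_not_mem hxy
  have hper : F ∈ periodicPts (preimage g) := mk_mem_periodicPts hk <| by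
    rw [IsPeriodicPt, IsFixedPt, ← preimage_iterate_eq, hgk, preimage_id]
  exact ⟨_, minimalPeriod_pos_of_mem_periodicPts hper, cubeRep g F,
    isRotHom_cubeRep hF hper hg_sup hg_inf, cubeRep_surjective hF hper hg_sup hg_inf ⟨x, hxF⟩
      ⟨y, hyF⟩, fun h => hyF (zero_mem_cubeRep.1 (h ▸ zero_mem_cubeRep.2 hxF))⟩

theorem IsDistRotLat.exists_surjective_cubeHom_ne {A : Type*} {s i : A → A → A} {g : A → A}
    (hA : IsDistRotLat s i g) {x y : A} (hxy : x ≠ y) :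
    ∃ d, 0 < d ∧ ∃ φ : A → Set (ZMod d),
      IsRotHom s i g (· ∪ ·) (· ∩ ·) (cubeShift d) φ ∧ Surjective φ ∧ φ x ≠ φ y := by
  obtain ⟨hsc, hsa, hic, hia, habs₁, habs₂, hdist, hg_sup, hg_inf, -, k, hk, hgk⟩ := hA
  let : Lattice A := @Lattice.mk' A ⟨s⟩ ⟨i⟩ hsc hsa hic hia habs₁ habs₂
  let : DistribLattice A := .ofInfSupLe fun a b c => (hdist a b c).le
  rcases hxy.not_le_or_not_ge with h | h
  · exact exists_surjective_cubeHom_of_not_le hg_sup hg_inf hk hgk h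
  · obtain ⟨d, hd, φ, hφ, hsurj, hne⟩ := exists_surjective_cubeHom_of_not_le hg_sup hg_inf hk hgk h
    exact ⟨d, hd, φ, hφ, hsurj, hne.symm⟩

theorem IsDistRotLat.sat_of_forall_cubeHom {A : Type*} {s i : A → A → A} {g : A → A}
    (hA : IsDistRotLat s i g) {e : RTerm × RTerm}
    (h : ∀ d, 0 < d → ∀ φ : A → Set (ZMod d), IsRotHom s i g (· ∪ ·) (· ∩ ·) (cubeShift d) φ →
      Surjective φ → Sat (· ∪ ·) (· ∩ ·) (cubeShift d) e) :
    Sat s i g e := by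
  intro v
  by_contra hne
  obtain ⟨d, hd, φ, hφ, hsurj, hφne⟩ := hA.exists_surjective_cubeHom_ne hne
  exact hφne (by rw [hφ.map_eval, hφ.map_eval]; exact h d hd φ hφ hsurj _)

theorem DivClosed.mem_of_dvd {Y : Set ℕ} (hY : DivClosed Y) {m n : ℕ} (hm : m ∈ Y) (hnm : n ∣ m) :
    n ∈ Y := by
  rcases n.eq_zero_or_pos with rfl | hn
  · rwa [← Nat.eq_zero_of_zero_dvd hnm]
  · exact hY.2.2 m hm n hnm hn

theorem MemV.mono {X Y : Set ℕ} {A : Type*} {s i : A → A → A} {g : A → A} (hXY : X ⊆ Y)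
    (h : MemV X s i g) : MemV Y s i g :=
  fun e he => h e fun n hn => he n (hXY hn)

theorem memV_cube {X : Set ℕ} {n : ℕ} (hn : n ∈ X) : MemV X (· ∪ ·) (· ∩ ·) (cubeShift n) :=
  fun _ he => he n hn

/-- The term `x₁ ⊓ ⋀_{m ∈ l} gᵐ x₀`; the factor `x₁` keeps the meet nonempty when `l = []`. -/
def sepTerm (l : List ℕ) : RTerm :=
  l.foldr (fun m t => .inf (RTerm.rot^[m] (.var 0)) t) (.var 1)

def sepIdent (l : List ℕ) : RTerm × RTerm :=
  (.sup (sepTerm l) (.var 0), .var 0)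

theorem mem_eval_sepTerm {n : ℕ} (l : List ℕ) (v : ℕ → Set (ZMod n)) (z : ZMod n) :
    z ∈ (sepTerm l).eval (· ∪ ·) (· ∩ ·) (cubeShift n) v ↔ z ∈ v 1 ∧ ∀ m ∈ l, z - m ∈ v 0 := by
  induction l with
  | nil => simp [sepTerm, RTerm.eval]
  | cons m l ih =>
    simp only [sepTerm, List.foldr_cons, RTerm.eval, mem_inter_iff, RTerm.eval_rot_iterate,
      mem_cubeShift_iterate, List.forall_mem_cons] at ih ⊢
    rw [ih]
    tauto

theorem sat_sepIdent {n : ℕ} {l : List ℕ} (hn : n ∈ l) :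
    Sat (· ∪ ·) (· ∩ ·) (cubeShift n) (sepIdent l) := by
  intro v
  refine union_eq_right.2 fun z hz => ?_
  simpa [RTerm.eval] using ((mem_eval_sepTerm l v z).1 hz).2 n hn

theorem not_sat_sepIdent {n : ℕ} {l : List ℕ} (hl : ∀ m ∈ l, ¬ n ∣ m) :
    ¬ Sat (· ∪ ·) (· ∩ ·) (cubeShift n) (sepIdent l) := by
  intro h
  let v (k : ℕ) : Set (ZMod n) := if k = 0 then {0}ᶜ else univ
  have h0 : (0 : ZMod n) ∈ (sepTerm l).eval (· ∪ ·) (· ∩ ·) (cubeShift n) v :=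
    (mem_eval_sepTerm l v 0).2
      ⟨trivial, fun m hm => by simpa [v, ZMod.natCast_eq_zero_iff] using hl m hm⟩
  exact union_eq_right.1 (h v) h0 rfl

theorem subset_of_forall_memV_imp {X Y : Set ℕ} (hY : DivClosed Y)
    (h : ∀ (A : Type) (s i : A → A → A) (g : A → A), MemV X s i g → MemV Y s i g) : X ⊆ Y := by
  intro n hn
  by_contra hnY
  have hl : ∀ m ∈ hY.1.toFinset.toList, ¬ n ∣ m := fun m hm hnm =>
    hnY (hY.mem_of_dvd (by simpa using hm) hnm)
  exact not_sat_sepIdent hl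
    (h _ _ _ _ (memV_cube hn) _ fun m hm => sat_sepIdent (by simpa using hm))

theorem forall_memV_imp_iff {X Y : Set ℕ} (hY : DivClosed Y) :
    (∀ (A : Type) (s i : A → A → A) (g : A → A), MemV X s i g → MemV Y s i g) ↔ X ⊆ Y :=
  ⟨subset_of_forall_memV_imp hY, fun hXY _ _ _ _ => MemV.mono hXY⟩

def cubeSpectrum (E : Set (RTerm × RTerm)) : Set ℕ :=
  {n | 0 < n ∧ ∀ e ∈ E, Sat (· ∪ ·) (· ∩ ·) (cubeShift n) e}

section Spectrum

variable {E : Set (RTerm × RTerm)}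

theorem divClosed_cubeSpectrum (hE : ∀ (A : Type) (s i : A → A → A) (g : A → A),
      (∀ e ∈ E, Sat s i g e) → IsDistRotLat s i g) :
    DivClosed (cubeSpectrum E) := by
  refine ⟨.of_isDistRotLat_pi_cube (hE _ _ _ _ fun e he => Sat.pi fun n => n.2.2 e he),
    fun n hn => hn.1, fun n hn m hmn hm => ⟨hm, fun e he => (hn.2 e he).cube_of_dvd hmn⟩⟩

theorem sat_iff_memV_cubeSpectrum (hE : ∀ (A : Type) (s i : A → A → A) (g : A → A),
      (∀ e ∈ E, Sat s i g e) → IsDistRotLat s i g)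
    (A : Type) (s i : A → A → A) (g : A → A) :
    (∀ e ∈ E, Sat s i g e) ↔ MemV (cubeSpectrum E) s i g := by
  refine ⟨fun hA e he => (hE A s i g hA).sat_of_forall_cubeHom fun d hd φ hφ hsurj => ?_,
    fun h e he => h e fun n hn => hn.2 e he⟩
  exact he d ⟨hd, fun e' he' => (hA e' he').of_surjective hφ hsurj⟩

end Spectrum

/-- `X ↦ V(X)` is an order isomorphism from the finite divisor-closed
subsets of `ℕ` onto the varieties of distributive rotational lattices: every
equationally defined class all of whose members are distributive rotational
lattices coincides with `V(X)` for a unique finite divisor-closed `X`, and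
`V(X) ⊆ V(Y)` iff `X ⊆ Y`. -/
theorem stmt_16 :
    (∀ E : Set (RTerm × RTerm),
      (∀ (A : Type) (s i : A → A → A) (g : A → A),
        (∀ e ∈ E, Sat s i g e) → IsDistRotLat s i g) →
      ∃! X : Set ℕ, DivClosed X ∧
        ∀ (A : Type) (s i : A → A → A) (g : A → A),
          (∀ e ∈ E, Sat s i g e) ↔ MemV X s i g) ∧
    (∀ X Y : Set ℕ, DivClosed X → DivClosed Y →
      ((∀ (A : Type) (s i : A → A → A) (g : A → A),
          MemV X s i g → MemV Y s i g) ↔ X ⊆ Y)) := by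
  refine ⟨fun E hE => ?_, fun X Y _ hY => forall_memV_imp_iff hY⟩
  have hX := divClosed_cubeSpectrum hE
  have hXE := sat_iff_memV_cubeSpectrum hE
  refine ⟨cubeSpectrum E, ⟨hX, hXE⟩, fun Y ⟨hY, hYE⟩ => ?_⟩
  refine subset_antisymm ((forall_memV_imp_iff hX).1 fun A s i g h => ?_)
    ((forall_memV_imp_iff hY).1 fun A s i g h => ?_)
  · exact (hXE A s i g).1 ((hYE A s i g).2 h)
  · exact (hYE A s i g).1 ((hXE A s i g).2 h)
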